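/- Let A be Metzler, B nonnegative, A + B Hurwitz, and let P be a diagonal positive definite matrix with (A+B)^T P + P (A+B) ≺ 0. Then there exists a diagonal positive definite matrix Q such that A^T P + P A + Q + P B Q^{-1} B^T P ≺ 0. -/

import Mathlib

/-!
A symmetric matrix `N` with nonpositive off-diagonal entries is positive definite as soon as
`N v ≫ 0` for some `v ≫ 0`. Applied to the Lyapunov matrix `M = -((A + B)ᵀP + P(A + B))`, which is
positive definite and of this sign pattern, the inverse-positivity of such matrices gives `v ≫ 0`
with `M v = 1`. Choosing the diagonal `Q` with `Q v = BᵀP v + 1/2`, the Riccati matrix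
`N = -(AᵀP + PA + Q + PBQ⁻¹BᵀP)` again has this sign pattern and satisfies
`N v = 1/2 + PBQ⁻¹ (1/2) ≫ 0`, hence is positive definite.
-/

open Matrix

namespace Matrix

section Nonneg

variable {l m n R : Type*} [Semiring R] [PartialOrder R] [IsOrderedRing R]

theorem mul_apply_nonneg [Fintype m] {A : Matrix l m R} {B : Matrix m n R}
    (hA : ∀ i j, 0 ≤ A i j) (hB : ∀ i j, 0 ≤ B i j) (i : l) (j : n) : 0 ≤ (A * B) i j :=
  Finset.sum_nonneg fun k _ ↦ mul_nonneg (hA i k) (hB k j)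

theorem mulVec_nonneg [Fintype m] {A : Matrix l m R} (hA : ∀ i j, 0 ≤ A i j) {v : m → R}
    (hv : 0 ≤ v) : 0 ≤ A *ᵥ v :=
  fun i ↦ Finset.sum_nonneg fun k _ ↦ mul_nonneg (hA i k) (hv k)

end Nonneg

theorem diagonal_apply_nonneg {m R : Type*} [DecidableEq m] [Zero R] [Preorder R] {d : m → R}
    (hd : 0 ≤ d) (i j : m) : 0 ≤ diagonal d i j := by
  rw [diagonal_apply]
  split_ifs
  exacts [hd i, le_rfl]

theorem inv_diagonal_of_ne_zero {ι K : Type*} [Fintype ι] [DecidableEq ι] [Field K] {d : ι → K}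
    (hd : ∀ i, d i ≠ 0) : (diagonal d)⁻¹ = diagonal d⁻¹ :=
  inv_eq_left_inv <| by simp [diagonal_mul_diagonal, hd]

theorem neg_riccati_mulVec {ι R : Type*} [Fintype ι] [DecidableEq ι] [CommRing R]
    (A B P Q : Matrix ι ι R) (hQ : IsUnit Q.det) {v w u : ι → R}
    (hv : -((A + B)ᵀ * P + P * (A + B)) *ᵥ v = w)
    (hQv : Q *ᵥ v = (Bᵀ * P) *ᵥ v + u) :
    -(Aᵀ * P + P * A + Q + P * B * Q⁻¹ * Bᵀ * P) *ᵥ v = w - u + (P * B * Q⁻¹) *ᵥ u := by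
  have hquad : (P * B * Q⁻¹ * Bᵀ * P) *ᵥ v = (P * B) *ᵥ v - (P * B * Q⁻¹) *ᵥ u := by
    rw [Matrix.mul_assoc _ Bᵀ, ← mulVec_mulVec, eq_sub_of_add_eq hQv.symm, mulVec_sub,
      mulVec_mulVec, nonsing_inv_mul_cancel_right _ _ hQ]
  simp only [neg_mulVec, add_mulVec, transpose_add, add_mul, mul_add, hquad] at hv ⊢
  linear_combination hv - hQv

def IsMetzler {ι : Type*} (A : Matrix ι ι ℝ) : Prop := ∀ i j, i ≠ j → 0 ≤ A i j

variable {ι : Type*}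

theorem IsMetzler.add {A B : Matrix ι ι ℝ} (hA : A.IsMetzler) (hB : B.IsMetzler) :
    (A + B).IsMetzler :=
  fun i j hij ↦ add_nonneg (hA i j hij) (hB i j hij)

theorem isMetzler_of_nonneg {A : Matrix ι ι ℝ} (hA : ∀ i j, 0 ≤ A i j) : A.IsMetzler :=
  fun i j _ ↦ hA i j

theorem isMetzler_diagonal [DecidableEq ι] (d : ι → ℝ) : (diagonal d).IsMetzler :=
  fun i j hij ↦ by simp [diagonal_apply_ne _ hij]

theorem IsMetzler.transpose_mul_diagonal_add [Fintype ι] [DecidableEq ι] {A : Matrix ι ι ℝ}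
    (hA : A.IsMetzler) {p : ι → ℝ} (hp : 0 ≤ p) :
    (Aᵀ * diagonal p + diagonal p * A).IsMetzler := fun i j hij ↦ by
  simpa [mul_diagonal, diagonal_mul] using
    add_nonneg (mul_nonneg (hA j i hij.symm) (hp j)) (mul_nonneg (hp i) (hA i j hij))

section ZMatrix

variable [Fintype ι] {M : Matrix ι ι ℝ}

theorem IsMetzler.abs_dotProduct_mulVec_abs_le (hZ : (-M).IsMetzler) (x : ι → ℝ) :
    |x| ⬝ᵥ M *ᵥ |x| ≤ x ⬝ᵥ M *ᵥ x := by
  simp only [dotProduct, mulVec, Finset.mul_sum, Pi.abs_apply]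
  refine Finset.sum_le_sum fun i _ ↦ Finset.sum_le_sum fun j _ ↦ ?_
  obtain rfl | hij := eq_or_ne i j
  · rw [mul_left_comm, abs_mul_abs_self, mul_left_comm]
  · have hMij : M i j ≤ 0 := neg_nonneg.1 (hZ i j hij)
    have : x i * x j ≤ |x i| * |x j| := abs_mul (x i) (x j) ▸ le_abs_self _
    nlinarith

theorem IsMetzler.nonneg_of_mulVec_nonneg (hM : M.PosDef) (hZ : (-M).IsMetzler) {v : ι → ℝ}
    (hv : 0 ≤ M *ᵥ v) : 0 ≤ v := by
  suffices |v| = v from this ▸ abs_nonneg v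
  -- Otherwise `|v| - v ≠ 0` would have `(|v| - v) ⬝ᵥ M *ᵥ (|v| - v) ≤ 2 (v - |v|) ⬝ᵥ M *ᵥ v ≤ 0`.
  by_contra hne
  have hsymm : v ⬝ᵥ M *ᵥ |v| = |v| ⬝ᵥ M *ᵥ v := by
    rw [dotProduct_mulVec, ← mulVec_transpose, dotProduct_comm,
      ← conjTranspose_eq_transpose_of_trivial, hM.isHermitian]
  have hpos : 0 < (|v| - v) ⬝ᵥ M *ᵥ (|v| - v) := by
    simpa using hM.dotProduct_mulVec_pos (sub_ne_zero.2 hne)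
  have hle : 0 ≤ (|v| - v) ⬝ᵥ M *ᵥ v :=
    dotProduct_nonneg_of_nonneg (sub_nonneg.2 (le_abs_self v)) hv
  have := hZ.abs_dotProduct_mulVec_abs_le v
  simp only [mulVec_sub, dotProduct_sub, sub_dotProduct] at hpos hle
  linarith

theorem IsMetzler.pos_of_mulVec_pos [DecidableEq ι] (hZ : (-M).IsMetzler) {v : ι → ℝ}
    (hv : 0 ≤ v) (hMv : ∀ i, 0 < (M *ᵥ v) i) (i : ι) : 0 < v i := by
  have hsplit : (M *ᵥ v) i = M i i * v i + ∑ j ∈ Finset.univ.erase i, M i j * v j :=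
    (Finset.add_sum_erase _ _ (Finset.mem_univ i)).symm
  have hoff : ∑ j ∈ Finset.univ.erase i, M i j * v j ≤ 0 :=
    Finset.sum_nonpos fun j hj ↦ mul_nonpos_of_nonpos_of_nonneg
      (neg_nonneg.1 (hZ i j (Finset.ne_of_mem_erase hj).symm)) (hv j)
  have : 0 < M i i * v i := by linarith [hMv i]
  exact (hv i).lt_of_ne fun h ↦ by simp [← h] at this

theorem IsMetzler.exists_pos_mulVec_eq_one [DecidableEq ι] (hM : M.PosDef)
    (hZ : (-M).IsMetzler) : ∃ v : ι → ℝ, (∀ i, 0 < v i) ∧ M *ᵥ v = 1 := by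
  have hMv : M *ᵥ (M⁻¹ *ᵥ 1) = 1 := by
    rw [mulVec_mulVec, mul_nonsing_inv _ ((isUnit_iff_isUnit_det M).1 hM.isUnit), one_mulVec]
  refine ⟨M⁻¹ *ᵥ 1, hZ.pos_of_mulVec_pos (hZ.nonneg_of_mulVec_nonneg hM ?_) ?_, hMv⟩
  · rw [hMv]; exact zero_le_one
  · simp [hMv]

theorem IsMetzler.sum_mulVec_mul_sq_le (hS : M.IsHermitian) (hZ : (-M).IsMetzler)
    {v : ι → ℝ} (hv : 0 ≤ v) (y : ι → ℝ) :
    ∑ i, (M *ᵥ v) i * v i * y i ^ 2 ≤ (v * y) ⬝ᵥ M *ᵥ (v * y) := by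
  have hsymm (i j : ι) : M j i = M i j := by simpa using hS.apply i j
  -- `2 yᵢ yⱼ = yᵢ² + yⱼ² - (yᵢ - yⱼ)²`, and the last term only meets off-diagonal entries.
  have hsplit (i j : ι) : (v * y) i * (M i j * (v * y) j) = M i j * v j * (v i * y i ^ 2) / 2
      + M j i * v i * (v j * y j ^ 2) / 2 - M i j * v i * v j * (y i - y j) ^ 2 / 2 := by
    rw [hsymm]; simp only [Pi.mul_apply]; ring
  have hcross : ∑ i, ∑ j, M i j * v i * v j * (y i - y j) ^ 2 / 2 ≤ 0 := by
    refine Finset.sum_nonpos fun i _ ↦ Finset.sum_nonpos fun j _ ↦ ?_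
    obtain rfl | hij := eq_or_ne i j
    · simp
    · have : M i j * (v i * v j * (y i - y j) ^ 2) ≤ 0 :=
        mul_nonpos_of_nonpos_of_nonneg (neg_nonneg.1 (hZ i j hij))
          (mul_nonneg (mul_nonneg (hv i) (hv j)) (sq_nonneg _))
      linarith
  have hdiag : ∑ i, ∑ j, M i j * v j * (v i * y i ^ 2) / 2 =
      ∑ i, (M *ᵥ v) i * v i * y i ^ 2 / 2 := by
    simp only [mulVec, dotProduct, Finset.sum_div, Finset.sum_mul]
    exact Finset.sum_congr rfl fun i _ ↦ Finset.sum_congr rfl fun j _ ↦ by ring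
  calc ∑ i, (M *ᵥ v) i * v i * y i ^ 2
      = ∑ i, ∑ j, M i j * v j * (v i * y i ^ 2) / 2
        + ∑ i, ∑ j, M i j * v j * (v i * y i ^ 2) / 2 := by
          rw [hdiag, ← Finset.sum_add_distrib]; simp only [add_halves]
    _ ≤ ∑ i, ∑ j, M i j * v j * (v i * y i ^ 2) / 2
        + ∑ i, ∑ j, M i j * v j * (v i * y i ^ 2) / 2
        - ∑ i, ∑ j, M i j * v i * v j * (y i - y j) ^ 2 / 2 := by linarith
    _ = (v * y) ⬝ᵥ M *ᵥ (v * y) := by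
        simp only [dotProduct, mulVec, Finset.mul_sum, hsplit, Finset.sum_add_distrib,
          Finset.sum_sub_distrib]
        rw [Finset.sum_comm (f := fun i j ↦ M j i * v i * (v j * y j ^ 2) / 2)]

theorem IsMetzler.posDef_of_mulVec_pos (hS : M.IsHermitian) (hZ : (-M).IsMetzler) {v : ι → ℝ}
    (hv : ∀ i, 0 < v i) (hMv : ∀ i, 0 < (M *ᵥ v) i) : M.PosDef := by
  refine PosDef.of_dotProduct_mulVec_pos hS fun x hx ↦ ?_
  obtain ⟨i, hi⟩ : ∃ i, x i ≠ 0 := Function.ne_iff.1 hx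
  have hx : v * (x / v) = x := funext fun i ↦ mul_div_cancel₀ _ (hv i).ne'
  rw [star_trivial, ← hx]
  refine lt_of_lt_of_le ?_ (hZ.sum_mulVec_mul_sq_le hS (fun i ↦ (hv i).le) (x / v))
  refine Finset.sum_pos' (fun j _ ↦ by have := hMv j; have := hv j; positivity)
    ⟨i, Finset.mem_univ i, ?_⟩
  have := hMv i
  have := hv i
  have : (x / v) i ≠ 0 := div_ne_zero hi (hv i).ne'
  positivity

end ZMatrix

end Matrix

theorem metzler_riccati_given_P_general (n : ℕ) (A B : Matrix (Fin n) (Fin n) ℝ)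
    (hMetzler : ∀ i j, i ≠ j → 0 ≤ A i j) (hB : ∀ i j, 0 ≤ B i j)
    (p : Fin n → ℝ) (hp : ∀ i, 0 < p i)
    (hLyap : (-((A + B)ᵀ * Matrix.diagonal p + Matrix.diagonal p * (A + B))).PosDef) :
    ∃ q : Fin n → ℝ, (∀ i, 0 < q i) ∧
      (-(Aᵀ * Matrix.diagonal p + Matrix.diagonal p * A + Matrix.diagonal q +
        Matrix.diagonal p * B * (Matrix.diagonal q)⁻¹ * Bᵀ * Matrix.diagonal p)).PosDef := by
  have hp₀ : 0 ≤ p := fun i ↦ (hp i).le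
  have hA : A.IsMetzler := hMetzler
  have hPnn := diagonal_apply_nonneg hp₀
  obtain ⟨v, hv, hMv⟩ := IsMetzler.exists_pos_mulVec_eq_one hLyap <| by
    simpa using (hA.add (isMetzler_of_nonneg hB)).transpose_mul_diagonal_add hp₀
  set d := (Bᵀ * diagonal p) *ᵥ v
  have hd : 0 ≤ d := mulVec_nonneg (mul_apply_nonneg (fun i j ↦ hB j i) hPnn) fun i ↦ (hv i).le
  set q : Fin n → ℝ := fun k ↦ (d k + 1 / 2) / v k
  have hq (k : Fin n) : 0 < q k := by have : 0 ≤ d k := hd k; have := hv k; positivity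
  have hQv : diagonal q *ᵥ v = d + fun _ ↦ 1 / 2 := by
    ext k; simp [mulVec_diagonal, q, div_mul_cancel₀ _ (hv k).ne']
  have hQinv := inv_diagonal_of_ne_zero fun k ↦ (hq k).ne'
  have hRnn : ∀ i j, 0 ≤ (diagonal p * B * (diagonal q)⁻¹) i j := by
    rw [hQinv]
    exact mul_apply_nonneg (mul_apply_nonneg hPnn hB)
      (diagonal_apply_nonneg fun k ↦ (inv_pos.2 (hq k)).le)
  have hQdet : IsUnit (diagonal q).det := by
    rw [det_diagonal]; exact (Finset.prod_pos fun k _ ↦ hq k).ne'.isUnit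
  have hNv := neg_riccati_mulVec A B (diagonal p) (diagonal q) hQdet hMv hQv
  refine ⟨q, hq, IsMetzler.posDef_of_mulVec_pos ?_ ?_ hv fun i ↦ ?_⟩
  · simp [IsHermitian, conjTranspose_eq_transpose_of_trivial, transpose_nonsing_inv,
      Matrix.mul_assoc, add_comm]
  · rw [neg_neg]
    exact ((hA.transpose_mul_diagonal_add hp₀).add (isMetzler_diagonal q)).add
      (isMetzler_of_nonneg (mul_apply_nonneg (mul_apply_nonneg hRnn (fun i j ↦ hB j i)) hPnn))
  · rw [hNv]
    have := mulVec_nonneg hRnn (fun _ ↦ by norm_num : (0 : Fin n → ℝ) ≤ fun _ ↦ 1 / 2) i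
    simp only [Pi.add_apply, Pi.sub_apply, Pi.one_apply, Pi.zero_apply] at this ⊢
    linarith

theorem metzler_riccati_given_P (n : ℕ) (A B : Matrix (Fin n) (Fin n) ℝ)
    (hMetzler : ∀ i j, i ≠ j → 0 ≤ A i j) (hB : ∀ i j, 0 ≤ B i j)
    (hHurwitz : ∀ μ ∈ spectrum ℂ ((A + B).map Complex.ofReal), μ.re < 0)
    (p : Fin n → ℝ) (hp : ∀ i, 0 < p i)
    (hLyap : (-((A + B)ᵀ * Matrix.diagonal p + Matrix.diagonal p * (A + B))).PosDef) :
    ∃ q : Fin n → ℝ, (∀ i, 0 < q i) ∧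
      (-(Aᵀ * Matrix.diagonal p + Matrix.diagonal p * A + Matrix.diagonal q +
        Matrix.diagonal p * B * (Matrix.diagonal q)⁻¹ * Bᵀ * Matrix.diagonal p)).PosDef :=
  metzler_riccati_given_P_general n A B hMetzler hB p hp hLyap
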